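/- Let G = (V,E) be a finite acyclic digraph with maximum out-degree at most Δ ≥ 1, η ∈ (0,1), and μ ∈ W_η^G with ε = 1−η. Suppose α, λ ∈ (0,1) satisfy ε ≤ (1−α)(1−λ)^Δ and ε ≤ (1−α)α^Δ. Let {X_i} have joint law μ, let {Y_i} be independent of {X_i} and i.i.d. Bernoulli(λ), and set Z_i = X_i·Y_i. Then for every i ∈ V, every Y ⊆ V\{i}, and every assignment z ∈ {0,1}^{|Y|} with P(⋀_{j}(Z_{i_j} = z_j)) > 0, we have P(Z_i = 1 | ⋀_j (Z_{i_j} = z_j)) ≥ αλ. -/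
import Mathlib


open Finset

open Classical in
/-- Probability of the event `P` under the (finitely supported) measure `μ`. -/
noncomputable def Pr {Ω : Type*} [Fintype Ω] (μ : Ω → ℝ) (P : Ω → Prop) : ℝ :=
  ∑ ω : Ω, if P ω then μ ω else 0

/-- The product Bernoulli measure `π_p` on `{0,1}^V`. -/
noncomputable def bernoulliProd {V : Type*} [Fintype V] (p : ℝ) (ω : V → Bool) : ℝ :=
  ∏ i : V, if ω i then p else 1 - p

/-- `μ ∈ W_η^G`: for every `i` and all disjoint `Y, Y' ⊆ V \ N̄(i)` with
positive-probability conditioning event, the conditional probability that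
`X_i = 1` is at least `η`. -/
def MemW {V : Type*} [Fintype V] [DecidableEq V] (E : V → V → Prop) (η : ℝ)
    (μ : (V → Bool) → ℝ) : Prop :=
  ∀ i : V, ∀ Y Y' : Finset V, Disjoint Y Y' →
    (∀ j ∈ Y, j ≠ i ∧ ¬ E i j) → (∀ j ∈ Y', j ≠ i ∧ ¬ E i j) →
    0 < Pr μ (fun ω => (∀ j ∈ Y, ω j = true) ∧ (∀ j ∈ Y', ω j = false)) →
    η * Pr μ (fun ω => (∀ j ∈ Y, ω j = true) ∧ (∀ j ∈ Y', ω j = false)) ≤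
      Pr μ (fun ω => ω i = true ∧ (∀ j ∈ Y, ω j = true) ∧ (∀ j ∈ Y', ω j = false))

section AuxLemmas

section PrBasic

variable {Ω : Type*} [Fintype Ω]

lemma Pr_nonneg {μ : Ω → ℝ} (h : ∀ ω, 0 ≤ μ ω) (P : Ω → Prop) : 0 ≤ Pr μ P := by
  unfold Pr
  refine Finset.sum_nonneg fun ω _ => ?_
  split
  · exact h ω
  · exact le_rfl

lemma Pr_mono {μ : Ω → ℝ} (h : ∀ ω, 0 ≤ μ ω) {P Q : Ω → Prop} (himp : ∀ ω, P ω → Q ω) :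
    Pr μ P ≤ Pr μ Q := by
  classical
  unfold Pr
  refine Finset.sum_le_sum fun ω _ => ?_
  by_cases hP : P ω
  · rw [if_pos hP, if_pos (himp ω hP)]
  · rw [if_neg hP]
    split
    · exact h ω
    · exact le_rfl

lemma Pr_congr {μ : Ω → ℝ} {P Q : Ω → Prop} (h : ∀ ω, P ω ↔ Q ω) : Pr μ P = Pr μ Q := by
  unfold Pr
  refine Finset.sum_congr rfl fun ω _ => ?_
  by_cases hP : P ω
  · rw [if_pos hP, if_pos ((h ω).1 hP)]
  · rw [if_neg hP, if_neg (fun hQ => hP ((h ω).2 hQ))]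

lemma Pr_split (μ : Ω → ℝ) (P Q : Ω → Prop) :
    Pr μ Q = Pr μ (fun ω => P ω ∧ Q ω) + Pr μ (fun ω => ¬ P ω ∧ Q ω) := by
  classical
  unfold Pr
  rw [← Finset.sum_add_distrib]
  refine Finset.sum_congr rfl fun ω _ => ?_
  by_cases hP : P ω <;> by_cases hQ : Q ω <;> simp [hP, hQ]

lemma Pr_eq_zero {μ : Ω → ℝ} {P : Ω → Prop} (h : ∀ ω, ¬ P ω) : Pr μ P = 0 := by
  unfold Pr
  exact Finset.sum_eq_zero fun ω _ => if_neg (h ω)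

end PrBasic

section Bern

variable {V : Type*} [Fintype V] [DecidableEq V]

lemma bern_nonneg {lam : ℝ} (hlam : lam ∈ Set.Ioo (0:ℝ) 1) (τ : V → Bool) :
    0 ≤ bernoulliProd lam τ := by
  refine Finset.prod_nonneg fun j _ => ?_
  split
  · exact le_of_lt hlam.1
  · linarith [hlam.2]

lemma sum_extract {lam : ℝ} (hlam : lam ∈ Set.Ioo (0:ℝ) 1)
    (i : V) (b : Bool) (h : (V → Bool) → ℝ)
    (hinv : ∀ τ c, h (Function.update τ i c) = h τ) :
    ∑ τ : V → Bool, (if τ i = b then bernoulliProd lam τ * h τ else 0)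
      = (if b = true then lam else 1 - lam) * ∑ τ : V → Bool, bernoulliProd lam τ * h τ := by
  classical
  set R : (V → Bool) → ℝ := fun τ => ∏ j ∈ Finset.univ.erase i, (if τ j then lam else 1 - lam)
    with hR
  have hRupd : ∀ τ c, R (Function.update τ i c) = R τ := fun τ c =>
    Finset.prod_congr rfl fun j hj => by
      rw [Function.update_of_ne (Finset.ne_of_mem_erase hj)]
  have hbern : ∀ τ, bernoulliProd lam τ = (if τ i = true then lam else 1 - lam) * R τ := by
    intro τ
    unfold bernoulliProd
    rw [← Finset.mul_prod_erase Finset.univ _ (Finset.mem_univ i)]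
  have key : ∑ τ : V → Bool, (if τ i = true then R τ * h τ else 0)
      = ∑ τ : V → Bool, (if τ i = false then R τ * h τ else 0) := by
    have hflip : Function.Bijective (fun τ : V → Bool => Function.update τ i (!(τ i))) := by
      refine Function.Involutive.bijective ?_
      intro τ
      funext k
      by_cases hk : k = i
      · subst hk; simp
      · simp [Function.update_of_ne hk]
    refine Fintype.sum_bijective _ hflip _ _ fun τ => ?_
    by_cases hτ : τ i = true
    · rw [if_pos hτ, if_pos (by simp [hτ]), hRupd, hinv]
    · rw [if_neg hτ, if_neg (by simp [Bool.not_eq_true] at hτ; simp [hτ])]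
  have hsplit : ∑ τ : V → Bool, bernoulliProd lam τ * h τ
      = lam * ∑ τ : V → Bool, (if τ i = true then R τ * h τ else 0)
        + (1 - lam) * ∑ τ : V → Bool, (if τ i = false then R τ * h τ else 0) := by
    rw [Finset.mul_sum, Finset.mul_sum, ← Finset.sum_add_distrib]
    refine Finset.sum_congr rfl fun τ _ => ?_
    rw [hbern τ]
    cases hτ : τ i <;> simp [hτ] <;> ring
  have hLHS : ∑ τ : V → Bool, (if τ i = b then bernoulliProd lam τ * h τ else 0)
      = (if b = true then lam else 1 - lam) * ∑ τ : V → Bool, (if τ i = b then R τ * h τ else 0) := by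
    rw [Finset.mul_sum]
    refine Finset.sum_congr rfl fun τ _ => ?_
    by_cases hτ : τ i = b
    · rw [if_pos hτ, if_pos hτ, hbern τ, hτ]
      ring
    · rw [if_neg hτ, if_neg hτ, mul_zero]
  cases b
  · rw [hLHS, hsplit, key]
    simp only [Bool.false_eq_true, if_false]
    ring
  · rw [hLHS, hsplit, key]
    simp only [if_true]
    ring


end Bern

section Extract

variable {V : Type*} [Fintype V] [DecidableEq V]

lemma Pr_extract (μ : (V → Bool) → ℝ) {lam : ℝ} (hlam : lam ∈ Set.Ioo (0:ℝ) 1)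
    (i : V) (b : Bool) (Q : ((V → Bool) × (V → Bool)) → Prop)
    (hQ : ∀ ω τ c, Q (ω, Function.update τ i c) ↔ Q (ω, τ)) :
    Pr (fun p => μ p.1 * bernoulliProd lam p.2) (fun p => p.2 i = b ∧ Q p)
      = (if b = true then lam else 1 - lam)
          * Pr (fun p => μ p.1 * bernoulliProd lam p.2) Q := by
  classical
  unfold Pr
  rw [Fintype.sum_prod_type]
  conv_rhs => rw [Fintype.sum_prod_type]
  rw [Finset.mul_sum]
  refine Finset.sum_congr rfl fun ω _ => ?_
  have main : (∑ τ : V → Bool, (if (τ i = b ∧ Q (ω, τ)) then μ ω * bernoulliProd lam τ else 0))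
      = (if b = true then lam else 1 - lam)
          * ∑ τ : V → Bool, (if Q (ω, τ) then μ ω * bernoulliProd lam τ else 0) :=
  calc ∑ τ : V → Bool, (if (τ i = b ∧ Q (ω, τ)) then μ ω * bernoulliProd lam τ else 0)
      = ∑ τ : V → Bool, (if τ i = b then bernoulliProd lam τ
          * (if Q (ω, τ) then μ ω else 0) else 0) := by
        refine Finset.sum_congr rfl fun τ _ => ?_
        by_cases h1 : τ i = b <;> by_cases h2 : Q (ω, τ) <;> simp [h1, h2, mul_comm]
    _ = (if b = true then lam else 1 - lam)
          * ∑ τ : V → Bool, bernoulliProd lam τ * (if Q (ω, τ) then μ ω else 0) :=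
        sum_extract hlam i b _ (fun τ c => by
          by_cases h2 : Q (ω, τ)
          · rw [if_pos ((hQ ω τ c).2 h2), if_pos h2]
          · rw [if_neg (fun hc => h2 ((hQ ω τ c).1 hc)), if_neg h2])
    _ = (if b = true then lam else 1 - lam)
          * ∑ τ : V → Bool, (if Q (ω, τ) then μ ω * bernoulliProd lam τ else 0) := by
        congr 1
        refine Finset.sum_congr rfl fun τ _ => ?_
        by_cases h2 : Q (ω, τ) <;> simp [h2, mul_comm]
  refine Eq.trans (Finset.sum_congr rfl fun τ _ => ?_) main
  by_cases h1 : τ i = b <;> by_cases h2 : Q (ω, τ) <;> simp [h1, h2]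

lemma Pr_extract_many (μ : (V → Bool) → ℝ) {lam : ℝ} (hlam : lam ∈ Set.Ioo (0:ℝ) 1)
    (S : Finset V) (b : Bool) (Q : ((V → Bool) × (V → Bool)) → Prop)
    (hQ : ∀ j ∈ S, ∀ ω τ c, Q (ω, Function.update τ j c) ↔ Q (ω, τ)) :
    Pr (fun p => μ p.1 * bernoulliProd lam p.2) (fun p => (∀ j ∈ S, p.2 j = b) ∧ Q p)
      = (if b = true then lam else 1 - lam) ^ S.card
          * Pr (fun p => μ p.1 * bernoulliProd lam p.2) Q := by
  classical
  induction S using Finset.induction_on with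
  | empty =>
      simp only [Finset.notMem_empty, false_implies, implies_true, true_and, Finset.card_empty,
        pow_zero, one_mul]
  | @insert j S hjS ih =>
      have step1 : Pr (fun p => μ p.1 * bernoulliProd lam p.2)
          (fun p => (∀ k ∈ insert j S, p.2 k = b) ∧ Q p)
          = Pr (fun p => μ p.1 * bernoulliProd lam p.2)
            (fun p => p.2 j = b ∧ ((∀ k ∈ S, p.2 k = b) ∧ Q p)) := by
        refine Pr_congr fun p => ?_
        simp only [Finset.forall_mem_insert]
        tauto
      rw [step1, Pr_extract μ hlam j b _ (fun ω τ c => ?_), ih (fun k hk => hQ k (Finset.mem_insert_of_mem hk)),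
        Finset.card_insert_of_notMem hjS, pow_succ]
      · ring
      · constructor
        · rintro ⟨h1, h2⟩
          refine ⟨fun k hk => ?_, (hQ j (Finset.mem_insert_self j S) ω τ c).1 h2⟩
          have hkj : k ≠ j := fun h => hjS (h ▸ hk)
          simpa [Function.update_of_ne hkj] using h1 k hk
        · rintro ⟨h1, h2⟩
          refine ⟨fun k hk => ?_, (hQ j (Finset.mem_insert_self j S) ω τ c).2 h2⟩
          have hkj : k ≠ j := fun h => hjS (h ▸ hk)
          show Function.update τ j c k = b
          rw [Function.update_of_ne hkj]
          exact h1 k hk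


lemma Pr_eps_mu (E : V → V → Prop) {η : ℝ} (hη : η ≤ 1)
    (μ : (V → Bool) → ℝ) (hpos : ∀ ω, 0 ≤ μ ω) (hμ : MemW E η μ)
    (i : V) (B : Finset V) (hB : ∀ j ∈ B, j ≠ i ∧ ¬ E i j) (z : V → Bool) (τ : V → Bool) :
    Pr μ (fun ω => ω i = false ∧ ∀ j ∈ B, (ω j && τ j) = z j)
      ≤ (1 - η) * Pr μ (fun ω => ∀ j ∈ B, (ω j && τ j) = z j) := by
  classical
  set Y1 : Finset V := B.filter (fun j => z j = true) with hY1
  set Y0 : Finset V := B.filter (fun j => z j = false ∧ τ j = true) with hY0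
  by_cases hcase : ∀ j ∈ Y1, τ j = true
  · have hiff : ∀ ω : V → Bool,
        (∀ j ∈ B, (ω j && τ j) = z j) ↔ ((∀ j ∈ Y1, ω j = true) ∧ (∀ j ∈ Y0, ω j = false)) := by
      intro ω
      constructor
      · intro h
        constructor
        · intro j hj
          have hjB : j ∈ B := (Finset.mem_filter.mp hj).1
          have hz : z j = true := (Finset.mem_filter.mp hj).2
          have := h j hjB
          rw [hz] at this
          exact (Bool.and_eq_true _ _ ▸ this).1
        · intro j hj
          have hjB : j ∈ B := (Finset.mem_filter.mp hj).1
          have hz : z j = false := (Finset.mem_filter.mp hj).2.1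
          have hτ : τ j = true := (Finset.mem_filter.mp hj).2.2
          have := h j hjB
          rw [hz, hτ, Bool.and_true] at this
          exact this
      · rintro ⟨h1, h0⟩ j hjB
        cases hz : z j with
        | true =>
          have hj1 : j ∈ Y1 := Finset.mem_filter.mpr ⟨hjB, hz⟩
          rw [h1 j hj1, hcase j hj1]
          rfl
        | false =>
          cases hτ : τ j with
          | false => rw [Bool.and_false]
          | true =>
            have hj0 : j ∈ Y0 := Finset.mem_filter.mpr ⟨hjB, hz, hτ⟩
            simp [h0 j hj0, hτ, hz]
    rw [Pr_congr hiff, Pr_congr (fun ω => and_congr_right fun _ => hiff ω)]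
    by_cases hpos' : 0 < Pr μ (fun ω => (∀ j ∈ Y1, ω j = true) ∧ (∀ j ∈ Y0, ω j = false))
    · have hdisj : Disjoint Y1 Y0 := by
        rw [Finset.disjoint_left]
        intro a ha ha'
        have h1 := (Finset.mem_filter.mp ha).2
        have h0 := (Finset.mem_filter.mp ha').2.1
        rw [h1] at h0
        exact Bool.true_eq_false.mp h0 |>.elim
      have hW := hμ i Y1 Y0 hdisj (fun j hj => hB j (Finset.mem_filter.mp hj).1)
        (fun j hj => hB j (Finset.mem_filter.mp hj).1) hpos'
      have hsplit := Pr_split μ (fun ω => ω i = true)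
        (fun ω => (∀ j ∈ Y1, ω j = true) ∧ (∀ j ∈ Y0, ω j = false))
      have hneg : Pr μ (fun ω => ¬ ω i = true ∧ ((∀ j ∈ Y1, ω j = true) ∧ (∀ j ∈ Y0, ω j = false)))
          = Pr μ (fun ω => ω i = false ∧ ((∀ j ∈ Y1, ω j = true) ∧ (∀ j ∈ Y0, ω j = false))) :=
        Pr_congr fun ω => by rw [Bool.not_eq_true]
      rw [hneg] at hsplit
      linarith
    · have hzero : Pr μ (fun ω => (∀ j ∈ Y1, ω j = true) ∧ (∀ j ∈ Y0, ω j = false)) = 0 :=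
        le_antisymm (not_lt.mp hpos') (Pr_nonneg hpos _)
      have hle : Pr μ (fun ω => ω i = false ∧ ((∀ j ∈ Y1, ω j = true) ∧ (∀ j ∈ Y0, ω j = false)))
          ≤ 0 := hzero ▸ Pr_mono hpos (fun ω h => h.2)
      have hge : 0 ≤ Pr μ (fun ω => ω i = false ∧ ((∀ j ∈ Y1, ω j = true) ∧ (∀ j ∈ Y0, ω j = false))) :=
        Pr_nonneg hpos _
      rw [hzero]
      linarith
  · push_neg at hcase
    obtain ⟨j0, hj0, hτ0⟩ := hcase
    have hz0 : z j0 = true := (Finset.mem_filter.mp hj0).2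
    have hne : ∀ ω : V → Bool, ¬ (∀ j ∈ B, (ω j && τ j) = z j) := by
      intro ω h
      have := h j0 (Finset.mem_filter.mp hj0).1
      simp only [Bool.not_eq_true] at hτ0
      rw [hτ0, Bool.and_false, hz0] at this
      exact Bool.false_eq_true.mp this |>.elim
    rw [Pr_eq_zero hne, Pr_eq_zero (fun ω h => hne ω h.2), mul_zero]

lemma Pr_eps (E : V → V → Prop) {η : ℝ} (hη : η ≤ 1)
    (μ : (V → Bool) → ℝ) (hpos : ∀ ω, 0 ≤ μ ω) (hμ : MemW E η μ)
    {lam : ℝ} (hlam : lam ∈ Set.Ioo (0:ℝ) 1)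
    (i : V) (B : Finset V) (hB : ∀ j ∈ B, j ≠ i ∧ ¬ E i j) (z : V → Bool) :
    Pr (fun p : (V → Bool) × (V → Bool) => μ p.1 * bernoulliProd lam p.2)
        (fun p => p.1 i = false ∧ ∀ j ∈ B, (p.1 j && p.2 j) = z j)
      ≤ (1 - η) * Pr (fun p : (V → Bool) × (V → Bool) => μ p.1 * bernoulliProd lam p.2)
          (fun p => ∀ j ∈ B, (p.1 j && p.2 j) = z j) := by
  classical
  unfold Pr
  rw [Fintype.sum_prod_type_right]
  conv_rhs => rw [Fintype.sum_prod_type_right]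
  rw [Finset.mul_sum]
  refine Finset.sum_le_sum fun τ _ => ?_
  have h1 : (∑ ω : V → Bool, if (ω i = false ∧ ∀ j ∈ B, (ω j && τ j) = z j)
        then μ ω * bernoulliProd lam τ else 0)
      = bernoulliProd lam τ * Pr μ (fun ω => ω i = false ∧ ∀ j ∈ B, (ω j && τ j) = z j) := by
    unfold Pr
    rw [Finset.mul_sum]
    refine Finset.sum_congr rfl fun ω _ => ?_
    by_cases h : (ω i = false ∧ ∀ j ∈ B, (ω j && τ j) = z j) <;> simp [h, mul_comm]
  have h2 : (∑ ω : V → Bool, if (∀ j ∈ B, (ω j && τ j) = z j)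
        then μ ω * bernoulliProd lam τ else 0)
      = bernoulliProd lam τ * Pr μ (fun ω => ∀ j ∈ B, (ω j && τ j) = z j) := by
    unfold Pr
    rw [Finset.mul_sum]
    refine Finset.sum_congr rfl fun ω _ => ?_
    by_cases h : (∀ j ∈ B, (ω j && τ j) = z j) <;> simp [h, mul_comm]
  have keyτ : (∑ ω : V → Bool, if (ω i = false ∧ ∀ j ∈ B, (ω j && τ j) = z j)
        then μ ω * bernoulliProd lam τ else 0)
      ≤ (1 - η) * ∑ ω : V → Bool, if (∀ j ∈ B, (ω j && τ j) = z j)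
          then μ ω * bernoulliProd lam τ else 0 := by
    rw [h1, h2]
    calc bernoulliProd lam τ * Pr μ (fun ω => ω i = false ∧ ∀ j ∈ B, (ω j && τ j) = z j)
        ≤ bernoulliProd lam τ * ((1 - η) * Pr μ (fun ω => ∀ j ∈ B, (ω j && τ j) = z j)) :=
          mul_le_mul_of_nonneg_left (Pr_eps_mu E hη μ hpos hμ i B hB z τ) (bern_nonneg hlam τ)
      _ = (1 - η) * (bernoulliProd lam τ * Pr μ (fun ω => ∀ j ∈ B, (ω j && τ j) = z j)) := by
          ring
  refine le_trans (le_of_eq (Finset.sum_congr rfl fun ω _ => ?_))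
    (le_trans keyτ (le_of_eq (congrArg (fun s => (1 - η) * s)
      (Finset.sum_congr rfl fun ω _ => ?_))))
  · by_cases h : (ω i = false ∧ ∀ j ∈ B, (ω j && τ j) = z j) <;> simp [h]
  · by_cases h : (∀ j ∈ B, (ω j && τ j) = z j) <;> simp [h]

end Extract

end AuxLemmas

lemma forall_update_iff'' {V : Type*} [DecidableEq V] (S : Finset V) (j : V) (hj : j ∉ S)
    (f : V → Bool → Prop) (τ : V → Bool) (c : Bool) :
    (∀ k ∈ S, f k (Function.update τ j c k)) ↔ (∀ k ∈ S, f k (τ k)) :=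
  forall₂_congr fun k hk => by
    have hkj : k ≠ j := by rintro rfl; exact hj hk
    rw [Function.update_of_ne hkj]

/-- Key lemma for the directed Liggett–Schonmann–Stacey theorem: with `{X_i}` of
law `μ ∈ W_η^G`, `{Y_i}` independent i.i.d. Bernoulli(λ) (realized on the product
space with joint law `κ(ω,τ) = μ(ω)·π_λ(τ)`), and `Z_i = X_i·Y_i`, for every
vertex `i`, every `Y ⊆ V \ {i}` and every assignment `z` on `Y` with
`P(⋀_{j∈Y}(Z_j = z_j)) > 0`, we have `P(Z_i = 1 | ⋀_{j∈Y}(Z_j = z_j)) ≥ αλ`. -/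
theorem lss_key_lemma {V : Type*} [Fintype V] [DecidableEq V]
    (E : V → V → Prop) [DecidableRel E]
    (hacyclic : ∀ i : V, ¬ Relation.TransGen E i i)
    (Δ : ℕ) (hΔ : 1 ≤ Δ)
    (hdeg : ∀ i : V, (Finset.univ.filter (fun j => E i j)).card ≤ Δ)
    (η : ℝ) (hη : η ∈ Set.Ioo (0 : ℝ) 1) (ε : ℝ) (hε : ε = 1 - η)
    (μ : (V → Bool) → ℝ) (hpos : ∀ ω, 0 ≤ μ ω) (hsum : ∑ ω, μ ω = 1)
    (hμ : MemW E η μ)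
    (α lam : ℝ) (hα : α ∈ Set.Ioo (0 : ℝ) 1) (hlam : lam ∈ Set.Ioo (0 : ℝ) 1)
    (hcond1 : ε ≤ (1 - α) * (1 - lam) ^ Δ) (hcond2 : ε ≤ (1 - α) * α ^ Δ)
    (κ : ((V → Bool) × (V → Bool)) → ℝ)
    (hκ : κ = fun p => μ p.1 * bernoulliProd lam p.2) :
    ∀ i : V, ∀ Y : Finset V, i ∉ Y → ∀ z : V → Bool,
      0 < Pr κ (fun p => ∀ j ∈ Y, (p.1 j && p.2 j) = z j) →
      α * lam * Pr κ (fun p => ∀ j ∈ Y, (p.1 j && p.2 j) = z j) ≤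
        Pr κ (fun p => (p.1 i && p.2 i) = true ∧ ∀ j ∈ Y, (p.1 j && p.2 j) = z j) := by
  classical
  obtain ⟨hη0, hη1⟩ := hη
  obtain ⟨hα0, hα1⟩ := hα
  obtain ⟨hlam0, hlam1⟩ := hlam
  subst hκ
  subst hε
  have hlam' : lam ∈ Set.Ioo (0:ℝ) 1 := ⟨hlam0, hlam1⟩
  have hκpos : ∀ p : (V → Bool) × (V → Bool), 0 ≤ μ p.1 * bernoulliProd lam p.2 :=
    fun p => mul_nonneg (hpos p.1) (bern_nonneg hlam' p.2)
  suffices H : ∀ n : ℕ, ∀ i : V, ∀ Y : Finset V, Y.card = n → i ∉ Y → ∀ z : V → Bool,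
      0 < Pr (fun p : (V → Bool) × (V → Bool) => μ p.1 * bernoulliProd lam p.2)
        (fun p => ∀ j ∈ Y, (p.1 j && p.2 j) = z j) →
      α * lam * Pr (fun p : (V → Bool) × (V → Bool) => μ p.1 * bernoulliProd lam p.2)
        (fun p => ∀ j ∈ Y, (p.1 j && p.2 j) = z j) ≤
        Pr (fun p : (V → Bool) × (V → Bool) => μ p.1 * bernoulliProd lam p.2)
          (fun p => (p.1 i && p.2 i) = true ∧ ∀ j ∈ Y, (p.1 j && p.2 j) = z j) by
    exact fun i Y hiY z h => H Y.card i Y rfl hiY z h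
  intro n
  induction n using Nat.strong_induction_on with
  | _ n IH =>
  intro i Y hYcard hiY z hposC
  set A1 : Finset V := Y.filter (fun j => E i j ∧ z j = true) with hA1def
  set A0 : Finset V := Y.filter (fun j => E i j ∧ ¬ z j = true) with hA0def
  set B : Finset V := Y.filter (fun j => ¬ E i j) with hBdef
  have hA1Y : A1 ⊆ Y := Finset.filter_subset _ _
  have hA0Y : A0 ⊆ Y := Finset.filter_subset _ _
  have hBY : B ⊆ Y := Finset.filter_subset _ _
  have hBcond : ∀ j ∈ B, j ≠ i ∧ ¬ E i j := fun j hj =>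
    ⟨fun h => hiY (h ▸ hBY hj), (Finset.mem_filter.mp hj).2⟩
  -- degree bound
  have hdegbound : A0.card + A1.card ≤ Δ := by
    have hdisj10 : Disjoint A0 A1 := by
      rw [Finset.disjoint_left]
      intro a ha ha'
      exact (Finset.mem_filter.mp ha).2.2 (Finset.mem_filter.mp ha').2.2
    have hsubN : A0 ∪ A1 ⊆ Finset.univ.filter (fun j => E i j) := by
      intro j hj
      rcases Finset.mem_union.mp hj with hj | hj
      · exact Finset.mem_filter.mpr ⟨Finset.mem_univ j, (Finset.mem_filter.mp hj).2.1⟩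
      · exact Finset.mem_filter.mpr ⟨Finset.mem_univ j, (Finset.mem_filter.mp hj).2.1⟩
    calc A0.card + A1.card = (A0 ∪ A1).card := (Finset.card_union_of_disjoint hdisj10).symm
      _ ≤ (Finset.univ.filter (fun j => E i j)).card := Finset.card_le_card hsubN
      _ ≤ Δ := hdeg i
  -- main event decomposition
  have hCiff : ∀ p : (V → Bool) × (V → Bool),
      (∀ j ∈ Y, (p.1 j && p.2 j) = z j) ↔
      ((∀ j ∈ A1, p.2 j = true) ∧ ((∀ j ∈ A1, p.1 j = true) ∧
        (∀ j ∈ A0, (p.1 j && p.2 j) = false) ∧ (∀ j ∈ B, (p.1 j && p.2 j) = z j))) := by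
    intro p
    constructor
    · intro h
      refine ⟨fun j hj => ?_, fun j hj => ?_, fun j hj => ?_,
        fun j hj => h j (hBY hj)⟩
      · have hz := (Finset.mem_filter.mp hj).2.2
        have h' := h j (hA1Y hj)
        rw [hz] at h'
        exact (Bool.and_eq_true _ _ ▸ h').2
      · have hz := (Finset.mem_filter.mp hj).2.2
        have h' := h j (hA1Y hj)
        rw [hz] at h'
        exact (Bool.and_eq_true _ _ ▸ h').1
      · have hz := (Finset.mem_filter.mp hj).2.2
        simp only [Bool.not_eq_true] at hz
        have h' := h j (hA0Y hj)
        rw [hz] at h'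
        exact h'
    · rintro ⟨h2, h1, h0, hb⟩ j hj
      by_cases hE : E i j
      · by_cases hz : z j = true
        · have hjA1 : j ∈ A1 := Finset.mem_filter.mpr ⟨hj, hE, hz⟩
          rw [h1 j hjA1, h2 j hjA1, hz]
          rfl
        · have hjA0 : j ∈ A0 := Finset.mem_filter.mpr ⟨hj, hE, hz⟩
          simp only [Bool.not_eq_true] at hz
          rw [h0 j hjA0, hz]
      · exact hb j (Finset.mem_filter.mpr ⟨hj, hE⟩)
  -- invariance of D (and of X_i=b ∧ D) in the second coordinate on A1
  have hDinv : ∀ j ∈ A1, ∀ (ω τ : V → Bool) (c : Bool),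
      ((∀ k ∈ A1, ω k = true) ∧ (∀ k ∈ A0, (ω k && Function.update τ j c k) = false) ∧
        (∀ k ∈ B, (ω k && Function.update τ j c k) = z k)) ↔
      ((∀ k ∈ A1, ω k = true) ∧ (∀ k ∈ A0, (ω k && τ k) = false) ∧
        (∀ k ∈ B, (ω k && τ k) = z k)) := by
    intro j hj ω τ c
    have hjA0 : j ∉ A0 := fun h => (Finset.mem_filter.mp h).2.2 (Finset.mem_filter.mp hj).2.2
    have hjB : j ∉ B := fun h => (Finset.mem_filter.mp h).2 (Finset.mem_filter.mp hj).2.1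
    exact and_congr_right fun _ => and_congr
      (forall_update_iff'' A0 j hjA0 (fun k b => (ω k && b) = false) τ c)
      (forall_update_iff'' B j hjB (fun k b => (ω k && b) = z k) τ c)
  -- (2): Pr C = lam^a1 * Pr D, and with X_i = b prepended
  have h2C : Pr (fun p : (V → Bool) × (V → Bool) => μ p.1 * bernoulliProd lam p.2)
      (fun p => ∀ j ∈ Y, (p.1 j && p.2 j) = z j)
      = lam ^ A1.card * Pr (fun p : (V → Bool) × (V → Bool) => μ p.1 * bernoulliProd lam p.2)
        (fun p => (∀ k ∈ A1, p.1 k = true) ∧ (∀ k ∈ A0, (p.1 k && p.2 k) = false) ∧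
          (∀ k ∈ B, (p.1 k && p.2 k) = z k)) := by
    rw [Pr_congr hCiff]
    have := Pr_extract_many μ hlam' A1 true
      (fun p => (∀ k ∈ A1, p.1 k = true) ∧ (∀ k ∈ A0, (p.1 k && p.2 k) = false) ∧
        (∀ k ∈ B, (p.1 k && p.2 k) = z k))
      (fun j hj ω τ c => hDinv j hj ω τ c)
    simpa using this
  have h2Cb : ∀ b : Bool, Pr (fun p : (V → Bool) × (V → Bool) => μ p.1 * bernoulliProd lam p.2)
      (fun p => p.1 i = b ∧ ∀ j ∈ Y, (p.1 j && p.2 j) = z j)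
      = lam ^ A1.card * Pr (fun p : (V → Bool) × (V → Bool) => μ p.1 * bernoulliProd lam p.2)
        (fun p => p.1 i = b ∧ ((∀ k ∈ A1, p.1 k = true) ∧ (∀ k ∈ A0, (p.1 k && p.2 k) = false) ∧
          (∀ k ∈ B, (p.1 k && p.2 k) = z k))) := by
    intro b
    rw [Pr_congr (fun p => and_congr_right fun _ => hCiff p)]
    rw [Pr_congr (fun p => and_left_comm)]
    have := Pr_extract_many μ hlam' A1 true
      (fun p => p.1 i = b ∧ ((∀ k ∈ A1, p.1 k = true) ∧ (∀ k ∈ A0, (p.1 k && p.2 k) = false) ∧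
        (∀ k ∈ B, (p.1 k && p.2 k) = z k)))
      (fun j hj ω τ c => and_congr_right fun _ => hDinv j hj ω τ c)
    simpa using this
  -- (3): extract Y_i
  have h3 : Pr (fun p : (V → Bool) × (V → Bool) => μ p.1 * bernoulliProd lam p.2)
      (fun p => (p.1 i && p.2 i) = true ∧ ∀ j ∈ Y, (p.1 j && p.2 j) = z j)
      = lam * Pr (fun p : (V → Bool) × (V → Bool) => μ p.1 * bernoulliProd lam p.2)
        (fun p => p.1 i = true ∧ ∀ j ∈ Y, (p.1 j && p.2 j) = z j) := by
    have hiff : ∀ p : (V → Bool) × (V → Bool),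
        ((p.1 i && p.2 i) = true ∧ ∀ j ∈ Y, (p.1 j && p.2 j) = z j) ↔
        (p.2 i = true ∧ (p.1 i = true ∧ ∀ j ∈ Y, (p.1 j && p.2 j) = z j)) := by
      intro p
      rw [Bool.and_eq_true]
      tauto
    rw [Pr_congr hiff]
    have := Pr_extract μ hlam' i true
      (fun p => p.1 i = true ∧ ∀ j ∈ Y, (p.1 j && p.2 j) = z j)
      (fun ω τ c => and_congr_right fun _ =>
        forall_update_iff'' Y i hiY (fun k b => (ω k && b) = z k) τ c)
    simpa using this
  -- (4): Pr ZA1 = lam^a1 * Pr XA1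
  have hXinvA1 : ∀ j ∈ A1, ∀ (ω τ : V → Bool) (c : Bool),
      ((∀ k ∈ A1, ω k = true) ∧ (∀ k ∈ B, (ω k && Function.update τ j c k) = z k)) ↔
      ((∀ k ∈ A1, ω k = true) ∧ (∀ k ∈ B, (ω k && τ k) = z k)) := by
    intro j hj ω τ c
    have hjB : j ∉ B := fun h => (Finset.mem_filter.mp h).2 (Finset.mem_filter.mp hj).2.1
    exact and_congr_right fun _ => forall_update_iff'' B j hjB (fun k b => (ω k && b) = z k) τ c
  have h4 : Pr (fun p : (V → Bool) × (V → Bool) => μ p.1 * bernoulliProd lam p.2)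
      (fun p => (∀ k ∈ A1, (p.1 k && p.2 k) = true) ∧ (∀ k ∈ B, (p.1 k && p.2 k) = z k))
      = lam ^ A1.card * Pr (fun p : (V → Bool) × (V → Bool) => μ p.1 * bernoulliProd lam p.2)
        (fun p => (∀ k ∈ A1, p.1 k = true) ∧ (∀ k ∈ B, (p.1 k && p.2 k) = z k)) := by
    have hiff : ∀ p : (V → Bool) × (V → Bool),
        ((∀ k ∈ A1, (p.1 k && p.2 k) = true) ∧ (∀ k ∈ B, (p.1 k && p.2 k) = z k)) ↔
        ((∀ k ∈ A1, p.2 k = true) ∧ ((∀ k ∈ A1, p.1 k = true) ∧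
          (∀ k ∈ B, (p.1 k && p.2 k) = z k))) := by
      intro p
      constructor
      · rintro ⟨h1, hb⟩
        refine ⟨fun k hk => ((Bool.and_eq_true _ _).mp (h1 k hk)).2,
          fun k hk => ((Bool.and_eq_true _ _).mp (h1 k hk)).1, hb⟩
      · rintro ⟨h2, h1, hb⟩
        exact ⟨fun k hk => by rw [h1 k hk, h2 k hk]; rfl, hb⟩
    rw [Pr_congr hiff]
    have := Pr_extract_many μ hlam' A1 true
      (fun p => (∀ k ∈ A1, p.1 k = true) ∧ (∀ k ∈ B, (p.1 k && p.2 k) = z k))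
      (fun j hj ω τ c => hXinvA1 j hj ω τ c)
    simpa using this
  -- (5): peeling, using the strong induction hypothesis
  have peel : ∀ A : Finset V, A ⊆ A1 →
      (α * lam) ^ A.card * Pr (fun p : (V → Bool) × (V → Bool) => μ p.1 * bernoulliProd lam p.2)
        (fun p => ∀ k ∈ B, (p.1 k && p.2 k) = z k)
      ≤ Pr (fun p : (V → Bool) × (V → Bool) => μ p.1 * bernoulliProd lam p.2)
        (fun p => ∀ k ∈ A ∪ B, (p.1 k && p.2 k) = z k) := by
    intro A
    induction A using Finset.induction_on with
    | empty =>
        intro _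
        rw [Finset.card_empty, pow_zero, one_mul]
        exact le_of_eq (Pr_congr fun p => by rw [Finset.empty_union])
    | @insert j A hjA ih =>
        intro hsub
        have hjA1 : j ∈ A1 := hsub (Finset.mem_insert_self j A)
        have hAsub : A ⊆ A1 := fun k hk => hsub (Finset.mem_insert_of_mem hk)
        have hjY : j ∈ Y := hA1Y hjA1
        have hzj : z j = true := (Finset.mem_filter.mp hjA1).2.2
        have hjB : j ∉ B := fun h => (Finset.mem_filter.mp h).2 (Finset.mem_filter.mp hjA1).2.1
        have hjAB : j ∉ A ∪ B := by
          rw [Finset.mem_union]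
          rintro (h | h)
          · exact hjA h
          · exact hjB h
        have hABsub : A ∪ B ⊆ Y.erase j := by
          intro k hk
          rcases Finset.mem_union.mp hk with hk | hk
          · exact Finset.mem_erase.mpr ⟨by rintro rfl; exact hjA hk, hA1Y (hAsub hk)⟩
          · exact Finset.mem_erase.mpr ⟨by rintro rfl; exact hjB hk, hBY hk⟩
        have hcardlt : (A ∪ B).card < n := by
          calc (A ∪ B).card ≤ (Y.erase j).card := Finset.card_le_card hABsub
            _ < Y.card := Finset.card_erase_lt_of_mem hjY
            _ = n := hYcard
        have hposA : 0 < Pr (fun p : (V → Bool) × (V → Bool) => μ p.1 * bernoulliProd lam p.2)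
            (fun p => ∀ k ∈ A ∪ B, (p.1 k && p.2 k) = z k) := by
          refine lt_of_lt_of_le hposC (Pr_mono hκpos fun p h k hk => ?_)
          rcases Finset.mem_union.mp hk with hk | hk
          · exact h k (hA1Y (hAsub hk))
          · exact h k (hBY hk)
        have hstep := IH (A ∪ B).card hcardlt j (A ∪ B) rfl hjAB z hposA
        have hEins : Pr (fun p : (V → Bool) × (V → Bool) => μ p.1 * bernoulliProd lam p.2)
            (fun p => (p.1 j && p.2 j) = true ∧ ∀ k ∈ A ∪ B, (p.1 k && p.2 k) = z k)
            = Pr (fun p : (V → Bool) × (V → Bool) => μ p.1 * bernoulliProd lam p.2)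
              (fun p => ∀ k ∈ insert j A ∪ B, (p.1 k && p.2 k) = z k) := by
          refine Pr_congr fun p => ?_
          rw [Finset.insert_union, Finset.forall_mem_insert, hzj]
        calc (α * lam) ^ (insert j A).card * Pr (fun p : (V → Bool) × (V → Bool) => μ p.1 * bernoulliProd lam p.2)
              (fun p => ∀ k ∈ B, (p.1 k && p.2 k) = z k)
            = (α * lam) * ((α * lam) ^ A.card * Pr (fun p : (V → Bool) × (V → Bool) => μ p.1 * bernoulliProd lam p.2)
              (fun p => ∀ k ∈ B, (p.1 k && p.2 k) = z k)) := by
              rw [Finset.card_insert_of_notMem hjA, pow_succ]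
              ring
          _ ≤ (α * lam) * Pr (fun p : (V → Bool) × (V → Bool) => μ p.1 * bernoulliProd lam p.2)
              (fun p => ∀ k ∈ A ∪ B, (p.1 k && p.2 k) = z k) :=
              mul_le_mul_of_nonneg_left (ih hAsub) (mul_nonneg hα0.le hlam0.le)
          _ ≤ Pr (fun p : (V → Bool) × (V → Bool) => μ p.1 * bernoulliProd lam p.2)
              (fun p => (p.1 j && p.2 j) = true ∧ ∀ k ∈ A ∪ B, (p.1 k && p.2 k) = z k) := hstep
          _ = _ := hEins
  -- (9)/(10): α^a1 * Pr CB ≤ Pr XA1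
  have h9 : (α * lam) ^ A1.card * Pr (fun p : (V → Bool) × (V → Bool) => μ p.1 * bernoulliProd lam p.2)
      (fun p => ∀ k ∈ B, (p.1 k && p.2 k) = z k)
      ≤ Pr (fun p : (V → Bool) × (V → Bool) => μ p.1 * bernoulliProd lam p.2)
        (fun p => (∀ k ∈ A1, (p.1 k && p.2 k) = true) ∧ (∀ k ∈ B, (p.1 k && p.2 k) = z k)) := by
    refine le_trans (peel A1 subset_rfl) (le_of_eq (Pr_congr fun p => ?_))
    constructor
    · intro h
      refine ⟨fun k hk => ?_, fun k hk => h k (Finset.mem_union_right _ hk)⟩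
      have := h k (Finset.mem_union_left _ hk)
      rw [(Finset.mem_filter.mp hk).2.2] at this
      exact this
    · rintro ⟨h1, hb⟩ k hk
      rcases Finset.mem_union.mp hk with hk | hk
      · rw [h1 k hk, (Finset.mem_filter.mp hk).2.2]
      · exact hb k hk
  have h10 : α ^ A1.card * Pr (fun p : (V → Bool) × (V → Bool) => μ p.1 * bernoulliProd lam p.2)
      (fun p => ∀ k ∈ B, (p.1 k && p.2 k) = z k)
      ≤ Pr (fun p : (V → Bool) × (V → Bool) => μ p.1 * bernoulliProd lam p.2)
        (fun p => (∀ k ∈ A1, p.1 k = true) ∧ (∀ k ∈ B, (p.1 k && p.2 k) = z k)) := by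
    have hl : (0:ℝ) < lam ^ A1.card := pow_pos hlam0 _
    have h9' := h9
    rw [h4] at h9'
    have h' : lam ^ A1.card * (α ^ A1.card * Pr (fun p : (V → Bool) × (V → Bool) => μ p.1 * bernoulliProd lam p.2)
        (fun p => ∀ k ∈ B, (p.1 k && p.2 k) = z k))
        ≤ lam ^ A1.card * Pr (fun p : (V → Bool) × (V → Bool) => μ p.1 * bernoulliProd lam p.2)
          (fun p => (∀ k ∈ A1, p.1 k = true) ∧ (∀ k ∈ B, (p.1 k && p.2 k) = z k)) := by
      calc lam ^ A1.card * (α ^ A1.card * Pr (fun p : (V → Bool) × (V → Bool) => μ p.1 * bernoulliProd lam p.2)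
            (fun p => ∀ k ∈ B, (p.1 k && p.2 k) = z k))
          = (α * lam) ^ A1.card * Pr (fun p : (V → Bool) × (V → Bool) => μ p.1 * bernoulliProd lam p.2)
            (fun p => ∀ k ∈ B, (p.1 k && p.2 k) = z k) := by rw [mul_pow]; ring
        _ ≤ _ := h9'
    exact le_of_mul_le_mul_left h' hl
  -- (8)/(11): (1-lam)^a0 * Pr XA1 ≤ Pr D
  have hXinvA0 : ∀ j ∈ A0, ∀ (ω τ : V → Bool) (c : Bool),
      ((∀ k ∈ A1, ω k = true) ∧ (∀ k ∈ B, (ω k && Function.update τ j c k) = z k)) ↔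
      ((∀ k ∈ A1, ω k = true) ∧ (∀ k ∈ B, (ω k && τ k) = z k)) := by
    intro j hj ω τ c
    have hjB : j ∉ B := fun h => (Finset.mem_filter.mp h).2 (Finset.mem_filter.mp hj).2.1
    exact and_congr_right fun _ => forall_update_iff'' B j hjB (fun k b => (ω k && b) = z k) τ c
  have h11 : (1 - lam) ^ A0.card * Pr (fun p : (V → Bool) × (V → Bool) => μ p.1 * bernoulliProd lam p.2)
      (fun p => (∀ k ∈ A1, p.1 k = true) ∧ (∀ k ∈ B, (p.1 k && p.2 k) = z k))
      ≤ Pr (fun p : (V → Bool) × (V → Bool) => μ p.1 * bernoulliProd lam p.2)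
        (fun p => (∀ k ∈ A1, p.1 k = true) ∧ (∀ k ∈ A0, (p.1 k && p.2 k) = false) ∧
          (∀ k ∈ B, (p.1 k && p.2 k) = z k)) := by
    have hext := Pr_extract_many μ hlam' A0 false
      (fun p => (∀ k ∈ A1, p.1 k = true) ∧ (∀ k ∈ B, (p.1 k && p.2 k) = z k))
      (fun j hj ω τ c => hXinvA0 j hj ω τ c)
    simp only [Bool.false_eq_true, if_false] at hext
    rw [← hext]
    refine Pr_mono hκpos fun p h => ?_
    exact ⟨h.2.1, fun k hk => by rw [h.1 k hk, Bool.and_false], h.2.2⟩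
  -- (6)/(7): eps bound
  have h6 := Pr_eps E hη1.le μ hpos hμ hlam' i B hBcond z
  have h7 : Pr (fun p : (V → Bool) × (V → Bool) => μ p.1 * bernoulliProd lam p.2)
      (fun p => p.1 i = false ∧ ((∀ k ∈ A1, p.1 k = true) ∧ (∀ k ∈ A0, (p.1 k && p.2 k) = false) ∧
        (∀ k ∈ B, (p.1 k && p.2 k) = z k)))
      ≤ Pr (fun p : (V → Bool) × (V → Bool) => μ p.1 * bernoulliProd lam p.2)
        (fun p => p.1 i = false ∧ ∀ k ∈ B, (p.1 k && p.2 k) = z k) :=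
    Pr_mono hκpos fun p h => ⟨h.1, h.2.2.2⟩
  -- numeric bound
  have hnum : 1 - η ≤ (1 - α) * ((1 - lam) ^ A0.card * α ^ A1.card) := by
    rcases le_total (1 - lam) α with hmin | hmin
    · calc 1 - η ≤ (1 - α) * (1 - lam) ^ Δ := hcond1
        _ ≤ (1 - α) * (1 - lam) ^ (A0.card + A1.card) :=
            mul_le_mul_of_nonneg_left
              (pow_le_pow_of_le_one (by linarith) (by linarith) hdegbound) (by linarith)
        _ = (1 - α) * ((1 - lam) ^ A0.card * (1 - lam) ^ A1.card) := by rw [pow_add]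
        _ ≤ (1 - α) * ((1 - lam) ^ A0.card * α ^ A1.card) := by
            refine mul_le_mul_of_nonneg_left
              (mul_le_mul_of_nonneg_left (pow_le_pow_left₀ (by linarith) hmin _)
                (pow_nonneg (by linarith) _))
              (by linarith)
    · calc 1 - η ≤ (1 - α) * α ^ Δ := hcond2
        _ ≤ (1 - α) * α ^ (A0.card + A1.card) :=
            mul_le_mul_of_nonneg_left
              (pow_le_pow_of_le_one (by linarith) (by linarith) hdegbound) (by linarith)
        _ = (1 - α) * (α ^ A0.card * α ^ A1.card) := by rw [pow_add]
        _ ≤ (1 - α) * ((1 - lam) ^ A0.card * α ^ A1.card) := by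
            refine mul_le_mul_of_nonneg_left
              (mul_le_mul_of_nonneg_right (pow_le_pow_left₀ (by linarith) hmin _)
                (pow_nonneg hα0.le _))
              (by linarith)
  have hCBnn : 0 ≤ Pr (fun p : (V → Bool) × (V → Bool) => μ p.1 * bernoulliProd lam p.2)
      (fun p => ∀ k ∈ B, (p.1 k && p.2 k) = z k) := Pr_nonneg hκpos _
  -- split Pr D
  have hsplitD : Pr (fun p : (V → Bool) × (V → Bool) => μ p.1 * bernoulliProd lam p.2)
      (fun p => (∀ k ∈ A1, p.1 k = true) ∧ (∀ k ∈ A0, (p.1 k && p.2 k) = false) ∧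
        (∀ k ∈ B, (p.1 k && p.2 k) = z k))
      = Pr (fun p : (V → Bool) × (V → Bool) => μ p.1 * bernoulliProd lam p.2)
        (fun p => p.1 i = true ∧ ((∀ k ∈ A1, p.1 k = true) ∧ (∀ k ∈ A0, (p.1 k && p.2 k) = false) ∧
          (∀ k ∈ B, (p.1 k && p.2 k) = z k)))
      + Pr (fun p : (V → Bool) × (V → Bool) => μ p.1 * bernoulliProd lam p.2)
        (fun p => p.1 i = false ∧ ((∀ k ∈ A1, p.1 k = true) ∧ (∀ k ∈ A0, (p.1 k && p.2 k) = false) ∧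
          (∀ k ∈ B, (p.1 k && p.2 k) = z k))) := by
    have hs := Pr_split (fun p : (V → Bool) × (V → Bool) => μ p.1 * bernoulliProd lam p.2)
      (fun p => p.1 i = true)
      (fun p => (∀ k ∈ A1, p.1 k = true) ∧ (∀ k ∈ A0, (p.1 k && p.2 k) = false) ∧
        (∀ k ∈ B, (p.1 k && p.2 k) = z k))
    rw [hs]
    congr 1
    exact Pr_congr fun p => by rw [Bool.not_eq_true]
  -- final assembly
  rw [h3, h2Cb true, h2C]
  set pCB := Pr (fun p : (V → Bool) × (V → Bool) => μ p.1 * bernoulliProd lam p.2)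
    (fun p => ∀ k ∈ B, (p.1 k && p.2 k) = z k) with hpCB
  set pF := Pr (fun p : (V → Bool) × (V → Bool) => μ p.1 * bernoulliProd lam p.2)
    (fun p => p.1 i = false ∧ ∀ k ∈ B, (p.1 k && p.2 k) = z k) with hpF
  set pXA1 := Pr (fun p : (V → Bool) × (V → Bool) => μ p.1 * bernoulliProd lam p.2)
    (fun p => (∀ k ∈ A1, p.1 k = true) ∧ (∀ k ∈ B, (p.1 k && p.2 k) = z k)) with hpXA1
  set pD := Pr (fun p : (V → Bool) × (V → Bool) => μ p.1 * bernoulliProd lam p.2)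
    (fun p => (∀ k ∈ A1, p.1 k = true) ∧ (∀ k ∈ A0, (p.1 k && p.2 k) = false) ∧
      (∀ k ∈ B, (p.1 k && p.2 k) = z k)) with hpD
  set pD1 := Pr (fun p : (V → Bool) × (V → Bool) => μ p.1 * bernoulliProd lam p.2)
    (fun p => p.1 i = true ∧ ((∀ k ∈ A1, p.1 k = true) ∧ (∀ k ∈ A0, (p.1 k && p.2 k) = false) ∧
      (∀ k ∈ B, (p.1 k && p.2 k) = z k))) with hpD1
  set pD0 := Pr (fun p : (V → Bool) × (V → Bool) => μ p.1 * bernoulliProd lam p.2)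
    (fun p => p.1 i = false ∧ ((∀ k ∈ A1, p.1 k = true) ∧ (∀ k ∈ A0, (p.1 k && p.2 k) = false) ∧
      (∀ k ∈ B, (p.1 k && p.2 k) = z k))) with hpD0
  have t1 : pD0 ≤ (1 - η) * pCB := le_trans h7 h6
  have t2 : (1 - η) * pCB ≤ (1 - α) * ((1 - lam) ^ A0.card * α ^ A1.card) * pCB :=
    mul_le_mul_of_nonneg_right hnum hCBnn
  have t3 : (1 - lam) ^ A0.card * (α ^ A1.card * pCB) ≤ (1 - lam) ^ A0.card * pXA1 :=
    mul_le_mul_of_nonneg_left h10 (pow_nonneg (by linarith) _)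
  have t5 : (1 - α) * ((1 - lam) ^ A0.card * (α ^ A1.card * pCB)) ≤ (1 - α) * pD :=
    mul_le_mul_of_nonneg_left (le_trans t3 h11) (by linarith)
  have hD0' : pD0 ≤ (1 - α) * pD := by linarith [t1, t2, t5]
  have hD1' : α * pD ≤ pD1 := by linarith [hsplitD, hD0']
  have hfac : (0:ℝ) ≤ lam * lam ^ A1.card :=
    mul_nonneg hlam0.le (pow_nonneg hlam0.le _)
  have hm : lam * lam ^ A1.card * (α * pD) ≤ lam * lam ^ A1.card * pD1 :=
    mul_le_mul_of_nonneg_left hD1' hfac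
  linarith [hm]
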